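/- For any nonzero integers v1,...,vn, the maximum loneliness ML(v1,...,vn) is a rational number, and moreover the supremum in its definition is attained at some rational time t. -/

import Mathlib

/-!
The function `t ↦ min_i ‖t v_i‖` is upper semicontinuous and `1`-periodic, so it attains its
maximum at some `t₀`. If `t₀` were irrational, no `t₀ v_i` would lie in `½ℤ`, so every
`‖t v_i‖` would be affine with nonzero slope near `t₀`. If all coordinates achieving the minimum
increased in the same direction, moving `t₀` that way would increase the minimum; so two of them
have opposite slopes, and equating their distances gives a nontrivial linear equation with
integer coefficients for `t₀`. Hence `t₀` is rational, and then so is the maximum.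
-/

/-- Distance from a real number to the nearest integer. -/
noncomputable def distToInt (x : ℝ) : ℝ := ⨅ m : ℤ, |x - m|

/-- Maximum loneliness of a tuple of speeds. -/
noncomputable def ML {n : ℕ} (v : Fin n → ℤ) : ℝ :=
  ⨆ t : ℝ, ⨅ i : Fin n, distToInt (t * v i)

open Filter Topology Set

theorem distToInt_eq_abs_sub_round (x : ℝ) : distToInt x = |x - round x| :=
  le_antisymm (ciInf_le ⟨0, by rintro _ ⟨m, rfl⟩; positivity⟩ (round x))
    (le_ciInf fun m => round_le x m)

theorem distToInt_eq_norm (x : ℝ) : distToInt x = ‖(x : UnitAddCircle)‖ := by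
  rw [UnitAddCircle.norm_eq, distToInt_eq_abs_sub_round]

@[fun_prop]
theorem continuous_distToInt : Continuous distToInt := by
  rw [funext distToInt_eq_norm]
  exact continuous_norm.comp (AddCircle.continuous_mk' (1 : ℝ))

theorem distToInt_add_intCast (x : ℝ) (m : ℤ) : distToInt (x + m) = distToInt x := by
  simp only [distToInt_eq_abs_sub_round, round_add_intCast, Int.cast_add, add_sub_add_right_eq_sub]

theorem distToInt_eq_abs_sub_of_abs_lt {x : ℝ} {m : ℤ} (h : |x - m| < 1 / 2) :
    distToInt x = |x - m| := by
  rw [abs_lt] at h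
  rw [distToInt_eq_abs_sub_round, (round_eq_iff (n := m)).2 ⟨by linarith, by linarith⟩]

theorem distToInt_ratCast (q : ℚ) : distToInt q = ((|q - round q| : ℚ) : ℝ) := by
  rw [distToInt_eq_abs_sub_round, Rat.round_cast]
  push_cast
  rfl

theorem abs_lt_abs_add_of_mul_pos {a b : ℝ} (h : 0 < a * b) : |a| < |a + b| :=
  sq_lt_sq.1 (by nlinarith)

theorem eventually_distToInt_lt_add_mul {x w : ℝ} (hx : |x - round x| < 1 / 2)
    (hw : 0 < (x - round x) * w) :
    ∀ᶠ δ in 𝓝[>] 0, distToInt x < distToInt (x + δ * w) := by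
  set e := x - round x
  have hnear : ∀ᶠ δ in 𝓝 (0 : ℝ), |e + δ * w| < 1 / 2 :=
    ((by fun_prop : Continuous fun δ : ℝ => |e + δ * w|).tendsto' 0 _ (by simp)).eventually_lt_const hx
  filter_upwards [self_mem_nhdsWithin, nhdsWithin_le_nhds hnear] with δ (hδ : 0 < δ) hδw
  rw [distToInt_eq_abs_sub_round x, distToInt_eq_abs_sub_of_abs_lt (m := round x)
    (by rwa [add_sub_right_comm]), add_sub_right_comm]
  exact abs_lt_abs_add_of_mul_pos (by nlinarith)

noncomputable def lonelinessAt {ι : Type*} (v : ι → ℤ) (t : ℝ) : ℝ :=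
  ⨅ i, distToInt (t * v i)

section Loneliness

variable {ι : Type*} (v : ι → ℤ)

theorem lonelinessAt_periodic : Function.Periodic (lonelinessAt v) 1 := fun t => by
  simp only [lonelinessAt, add_mul, one_mul, distToInt_add_intCast]

variable [Finite ι]

theorem lonelinessAt_le (t : ℝ) (i : ι) : lonelinessAt v t ≤ distToInt (t * v i) :=
  ciInf_le (Finite.bddBelow_range _) i

theorem upperSemicontinuous_lonelinessAt : UpperSemicontinuous (lonelinessAt v) :=
  upperSemicontinuous_ciInf (fun _ => Finite.bddBelow_range _) fun _ =>
    (by fun_prop : Continuous _).upperSemicontinuous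

theorem exists_isMaxOn_lonelinessAt : ∃ t₀, IsMaxOn (lonelinessAt v) univ t₀ := by
  obtain ⟨t₀, -, hmax⟩ := ((upperSemicontinuous_lonelinessAt v).upperSemicontinuousOn
    (Icc 0 1)).exists_isMaxOn (nonempty_Icc.2 zero_le_one) isCompact_Icc
  refine ⟨t₀, fun t _ => ?_⟩
  obtain ⟨s, hs, hts⟩ := (lonelinessAt_periodic v).exists_mem_Ico₀ one_pos t
  exact hts.trans_le (hmax (Ico_subset_Icc_self hs))

variable [Nonempty ι]

theorem exists_lonelinessAt_eq (t : ℝ) : ∃ i, distToInt (t * v i) = lonelinessAt v t :=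
  exists_eq_ciInf_of_finite

theorem lt_lonelinessAt {c t : ℝ} (h : ∀ i, c < distToInt (t * v i)) : c < lonelinessAt v t := by
  obtain ⟨i, hi⟩ := exists_lonelinessAt_eq v t
  exact hi ▸ h i

theorem exists_rat_lonelinessAt_ratCast (q : ℚ) : ∃ r : ℚ, lonelinessAt v q = r := by
  obtain ⟨i, hi⟩ := exists_lonelinessAt_eq v q
  exact ⟨_, by rw [← hi, ← Rat.cast_intCast, ← Rat.cast_mul, distToInt_ratCast]⟩

theorem not_isLocalMax_lonelinessAt {t₀ : ℝ} (d : ℝ) (hc : lonelinessAt v t₀ < 1 / 2)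
    (hactive : ∀ i, distToInt (t₀ * v i) = lonelinessAt v t₀ →
      0 < (t₀ * v i - round (t₀ * v i)) * (d * v i)) :
    ¬ IsLocalMax (lonelinessAt v) t₀ := by
  intro hmax
  have hcoord : ∀ i, ∀ᶠ δ in 𝓝[>] 0, lonelinessAt v t₀ < distToInt ((t₀ + δ * d) * v i) := by
    intro i
    rcases (lonelinessAt_le v t₀ i).eq_or_lt with hact | hinact
    · have hlt : |t₀ * v i - round (t₀ * v i)| < 1 / 2 := by
        rwa [← distToInt_eq_abs_sub_round, ← hact]
      filter_upwards [eventually_distToInt_lt_add_mul hlt (hactive i hact.symm)] with δ hδ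
      rwa [hact, add_mul, mul_assoc]
    · have hcont : Continuous fun δ : ℝ => distToInt ((t₀ + δ * d) * v i) := by fun_prop
      exact nhdsWithin_le_nhds ((hcont.tendsto' 0 _ (by simp)).eventually_const_lt hinact)
  have hup : ∀ᶠ δ in 𝓝[>] 0, lonelinessAt v t₀ < lonelinessAt v (t₀ + δ * d) :=
    (eventually_all.2 hcoord).mono fun _ => lt_lonelinessAt v
  have hdown : ∀ᶠ δ in 𝓝[>] (0 : ℝ), lonelinessAt v (t₀ + δ * d) ≤ lonelinessAt v t₀ := by
    refine (Tendsto.mono_left ?_ nhdsWithin_le_nhds).eventually hmax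
    exact (by fun_prop : Continuous fun δ : ℝ => t₀ + δ * d).tendsto' 0 _ (by simp)
  obtain ⟨δ, hδup, hδdown⟩ := (hup.and hdown).exists
  exact hδdown.not_gt hδup

end Loneliness

theorem not_irrational_of_abs_eq_of_mul_neg {t : ℝ} {a b : ℤ}
    (habs : |t * a - round (t * a)| = |t * b - round (t * b)|)
    (hneg : (t * a - round (t * a)) * a * ((t * b - round (t * b)) * b) < 0) :
    ¬ Irrational t := by
  intro ht
  rcases abs_eq_abs.1 habs with he | he
  · have hab : a - b ≠ 0 := fun h => by
      rw [sub_eq_zero.1 h, ← he] at hneg; nlinarith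
    exact (ht.mul_intCast hab).ne_int (round (t * a) - round (t * b)) (by push_cast; linarith)
  · have hab : a + b ≠ 0 := fun h => by
      rw [he, eq_neg_of_add_eq_zero_left h] at hneg; push_cast at hneg
      nlinarith [sq_nonneg ((t * b - round (t * b)) * b)]
    exact (ht.mul_intCast hab).ne_int (round (t * a) + round (t * b)) (by push_cast; linarith)

theorem exists_rat_eq_of_isLocalMax_lonelinessAt {ι : Type*} [Finite ι] [Nonempty ι]
    {v : ι → ℤ} (hv : ∀ i, v i ≠ 0) {t₀ : ℝ} (hmax : IsLocalMax (lonelinessAt v) t₀) :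
    ∃ q : ℚ, (q : ℝ) = t₀ := by
  by_contra hirr
  change Irrational t₀ at hirr
  set e := fun i => t₀ * v i - round (t₀ * v i)
  have he : ∀ i, Irrational (e i) := fun i => (hirr.mul_intCast (hv i)).sub_intCast _
  have hslope : ∀ i, e i * v i ≠ 0 := fun i => mul_ne_zero (he i).ne_zero (by exact_mod_cast hv i)
  have hc : lonelinessAt v t₀ < 1 / 2 := by
    obtain ⟨i, hi⟩ := exists_lonelinessAt_eq v t₀
    rw [← hi, distToInt_eq_abs_sub_round]
    refine (abs_sub_round _).lt_of_ne fun h => ?_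
    rcases abs_eq (by norm_num) |>.1 h with h | h
    · exact (he i).ne_rat (1 / 2) (h.trans (by norm_num))
    · exact (he i).ne_rat (-1 / 2) (h.trans (by norm_num))
  obtain ⟨i, hi, hi_neg⟩ : ∃ i, distToInt (t₀ * v i) = lonelinessAt v t₀ ∧ e i * v i < 0 := by
    by_contra! h
    refine not_isLocalMax_lonelinessAt v 1 hc (fun i hi => ?_) hmax
    simpa only [one_mul] using (h i hi).lt_of_ne' (hslope i)
  obtain ⟨j, hj, hj_pos⟩ : ∃ j, distToInt (t₀ * v j) = lonelinessAt v t₀ ∧ 0 < e j * v j := by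
    by_contra! h
    refine not_isLocalMax_lonelinessAt v (-1) hc (fun i hi => ?_) hmax
    have := (h i hi).lt_of_ne (hslope i)
    simp only [neg_one_mul, mul_neg]
    linarith
  refine not_irrational_of_abs_eq_of_mul_neg ?_ (mul_neg_of_neg_of_pos hi_neg hj_pos) hirr
  rw [← distToInt_eq_abs_sub_round, ← distToInt_eq_abs_sub_round, hi, hj]

theorem ML_rational_and_attained (n : ℕ) (hn : 0 < n) (v : Fin n → ℤ)
    (hv : ∀ i, v i ≠ 0) :
    (∃ q : ℚ, ML v = (q : ℝ)) ∧
    (∃ t : ℚ, ML v = ⨅ i : Fin n, distToInt ((t : ℝ) * v i)) := by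
  have : Nonempty (Fin n) := Fin.pos_iff_nonempty.1 hn
  obtain ⟨t₀, hmax⟩ := exists_isMaxOn_lonelinessAt v
  obtain ⟨q, rfl⟩ := exists_rat_eq_of_isLocalMax_lonelinessAt hv (hmax.isLocalMax univ_mem)
  have hML : ML v = lonelinessAt v q :=
    ciSup_eq_of_forall_le_of_forall_lt_exists_gt (fun t => hmax (mem_univ t)) fun _ h => ⟨q, h⟩
  obtain ⟨r, hr⟩ := exists_rat_lonelinessAt_ratCast v q
  exact ⟨⟨r, hML.trans hr⟩, ⟨q, hML⟩⟩
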